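/- Let K ⊆ ℝ^d be a compact set with infinitely many connected components. Then the normed space (C¹(K), ‖·‖_{C¹(K)}) is not complete; concretely, there exists a sequence (f_n) in C¹(K) that is Cauchy for the norm ‖·‖_{C¹(K)} but has no limit in C¹(K) with respect to this norm. -/

import Mathlib

open Set Filter Topology MeasureTheory
open scoped NNReal ENNReal

noncomputable section

/-- `df` is a (not necessarily unique) derivative of `f` on the set `K`:
at every `x ∈ K`, `(f y - f x - ⟪df x, y - x⟫)/‖y - x‖ → 0` as `y → x` within `K`. -/
def IsDerivOn {d : ℕ} (K : Set (EuclideanSpace ℝ (Fin d)))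
    (f : EuclideanSpace ℝ (Fin d) → ℝ)
    (df : EuclideanSpace ℝ (Fin d) → EuclideanSpace ℝ (Fin d)) : Prop :=
  ∀ x ∈ K, Filter.Tendsto
    (fun y => (f y - f x - (inner ℝ (df x) (y - x) : ℝ)) / ‖y - x‖)
    (𝓝[K \ {x}] x) (𝓝 0)

/-- Sup norm of a function on `K`. -/
def supNormOn {d : ℕ} {α : Type*} [Norm α] (K : Set (EuclideanSpace ℝ (Fin d)))
    (g : EuclideanSpace ℝ (Fin d) → α) : ℝ :=
  sSup ((fun z => ‖g z‖) '' K)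

/-- `f ∈ C¹(K)`: `f` admits a continuous derivative on `K`. -/
def MemC1 {d : ℕ} (K : Set (EuclideanSpace ℝ (Fin d)))
    (f : EuclideanSpace ℝ (Fin d) → ℝ) : Prop :=
  ∃ df, ContinuousOn df K ∧ IsDerivOn K f df

/-- The quotient norm `‖f‖_{C¹(K)} = ‖f‖_K + inf {‖df‖_K : df a continuous derivative of f}`. -/
def c1Norm {d : ℕ} (K : Set (EuclideanSpace ℝ (Fin d)))
    (f : EuclideanSpace ℝ (Fin d) → ℝ) : ℝ :=
  supNormOn K f +
    sInf {r | ∃ df, ContinuousOn df K ∧ IsDerivOn K f df ∧ r = supNormOn K df}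

/-- A sequence of functions that is Cauchy with respect to the `C¹(K)` norm. -/
def C1Cauchy {d : ℕ} (K : Set (EuclideanSpace ℝ (Fin d)))
    (f : ℕ → EuclideanSpace ℝ (Fin d) → ℝ) : Prop :=
  ∀ ε > (0:ℝ), ∃ N : ℕ, ∀ m ≥ N, ∀ n ≥ N, c1Norm K (f m - f n) < ε

/-- Completeness of `(C¹(K), ‖·‖_{C¹(K)})`: every Cauchy sequence of `C¹(K)` functions
converges in the `C¹(K)` norm to a `C¹(K)` function. -/
def C1Complete {d : ℕ} (K : Set (EuclideanSpace ℝ (Fin d))) : Prop :=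
  ∀ f : ℕ → EuclideanSpace ℝ (Fin d) → ℝ, (∀ n, MemC1 K (f n)) → C1Cauchy K f →
    ∃ g, MemC1 K g ∧ Filter.Tendsto (fun n => c1Norm K (f n - g)) Filter.atTop (𝓝 0)

/-- The set of connected components of `K`. -/
def comps {d : ℕ} (K : Set (EuclideanSpace ℝ (Fin d))) : Set (Set (EuclideanSpace ℝ (Fin d))) :=
  {C | ∃ x ∈ K, C = connectedComponentIn K x}

/-!
Let `x ∈ K` be a limit of points `y k ∈ K` lying in other components, with
`|y k - x| < 2⁻ᵏ / (k + 1)`. Since `K` is compact, components are intersections of relatively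
clopen sets, so there are relatively clopen `S k ∋ y k` avoiding `x`. The partial sums of
`∑ₖ 2⁻ᵏ 1_{S k}` are locally constant on `K`, hence have derivative `0`, and they are Cauchy in
the sup norm, hence in `C¹(K)`. A `C¹(K)`-limit `g` would satisfy `g x = 0` and
`g (y k) ≥ 2⁻ᵏ > (k + 1) |y k - x|`, so it has no derivative at `x`.
-/

def IsLocallyConstantOn {X Y : Type*} [TopologicalSpace X] (K : Set X) (F : X → Y) : Prop :=
  ∀ x ∈ K, ∀ᶠ y in 𝓝[K] x, F y = F x

namespace IsLocallyConstantOn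

variable {X Y : Type*} [TopologicalSpace X] {K : Set X}

lemma continuousOn [TopologicalSpace Y] {F : X → Y} (h : IsLocallyConstantOn K F) :
    ContinuousOn F K := fun x hx =>
  tendsto_const_nhds.congr' ((h x hx).mono fun _ hy => hy.symm)

lemma comp {Z : Type*} {F : X → Y} (h : IsLocallyConstantOn K F) (g : Y → Z) :
    IsLocallyConstantOn K (g ∘ F) := fun x hx => (h x hx).mono fun _ hy => congrArg g hy

lemma comp₂ {Z W : Type*} {F : X → Y} {G : X → Z} (hF : IsLocallyConstantOn K F)
    (hG : IsLocallyConstantOn K G) (op : Y → Z → W) :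
    IsLocallyConstantOn K fun x => op (F x) (G x) := fun x hx => by
  filter_upwards [hF x hx, hG x hx] with y hFy hGy
  rw [hFy, hGy]

lemma finset_sum [AddCommMonoid Y] {ι : Type*} (s : Finset ι) {F : ι → X → Y}
    (h : ∀ i ∈ s, IsLocallyConstantOn K (F i)) :
    IsLocallyConstantOn K fun x => ∑ i ∈ s, F i x := fun x hx => by
  filter_upwards [(eventually_all_finset s).2 fun i hi => h i hi x hx] with y hy
  exact Finset.sum_congr rfl hy

end IsLocallyConstantOn

lemma exists_isLocallyConstantOn_indicator {X : Type*} [TopologicalSpace X] [T2Space X]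
    {K : Set X} (hK : IsCompact K) {p q : X} (hp : p ∈ K) (hq : q ∈ K)
    (hpq : connectedComponentIn K p ≠ connectedComponentIn K q) :
    ∃ S : Set X, IsLocallyConstantOn K (S.indicator (1 : X → ℝ)) ∧ p ∈ S ∧ q ∉ S := by
  have := isCompact_iff_compactSpace.mp hK
  have hq' : (⟨q, hq⟩ : K) ∉ connectedComponent (⟨p, hp⟩ : K) := fun h => hpq <| by
    rw [connectedComponentIn_eq_image hp, connectedComponentIn_eq_image hq,
      connectedComponent_eq h]
  rw [connectedComponent_eq_iInter_isClopen] at hq'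
  simp only [mem_iInter, not_forall] at hq'
  obtain ⟨⟨Z, hZ, hpZ⟩, hqZ⟩ := hq'
  refine ⟨Subtype.val '' Z, fun x hx => ?_, ⟨_, hpZ, rfl⟩,
    fun ⟨z, hz, hzq⟩ => hqZ ((Subtype.ext hzq : z = ⟨q, hq⟩) ▸ hz)⟩
  have hZloc : IsLocallyConstant (Z.indicator (1 : K → ℝ)) :=
    LocallyConstant.coe_charFn ℝ hZ ▸ (LocallyConstant.charFn ℝ hZ).isLocallyConstant
  have hval (a : K) : (Subtype.val '' Z).indicator (1 : X → ℝ) a = Z.indicator 1 a := by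
    classical
    rw [Set.indicator_apply, Set.indicator_apply, Subtype.val_injective.mem_set_image]; rfl
  rw [nhdsWithin_eq_map_subtype_coe hx, eventually_map]
  filter_upwards [hZloc.eventually_eq ⟨x, hx⟩] with a ha
  rw [show x = ((⟨x, hx⟩ : K) : X) from rfl, hval, hval, ha]

def indicatorSeries {X : Type*} (S : ℕ → Set X) (n : ℕ) (z : X) : ℝ :=
  ∑ k ∈ Finset.range n, (1 / 2) ^ k * (S k).indicator 1 z

section indicatorSeries

variable {X : Type*} {S : ℕ → Set X}

lemma indicatorSeries_eq_zero {z : X} (hz : ∀ k, z ∉ S k) (n : ℕ) : indicatorSeries S n z = 0 :=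
  Finset.sum_eq_zero fun k _ => by simp [hz k]

lemma pow_le_indicatorSeries {z : X} {k n : ℕ} (hz : z ∈ S k) (hkn : k < n) :
    (1 / 2) ^ k ≤ indicatorSeries S n z := by
  simpa [indicatorSeries, hz] using
    Finset.single_le_sum (f := fun j => (1 / 2 : ℝ) ^ j * (S j).indicator 1 z)
      (fun j _ => mul_nonneg (by positivity) (Set.indicator_nonneg (fun _ _ => zero_le_one) _))
      (Finset.mem_range.2 hkn)

lemma isLocallyConstantOn_indicatorSeries [TopologicalSpace X] {K : Set X}
    (hS : ∀ k, IsLocallyConstantOn K ((S k).indicator (1 : X → ℝ))) (n : ℕ) :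
    IsLocallyConstantOn K (indicatorSeries S n) :=
  .finset_sum _ fun k _ => (hS k).comp ((1 / 2) ^ k * ·)

end indicatorSeries

lemma abs_sum_range_sub_sum_range_le {c : ℕ → ℝ} (hc : ∀ k, |c k| ≤ (1 / 2) ^ k) {N m n : ℕ}
    (hm : N ≤ m) (hn : N ≤ n) :
    |∑ k ∈ Finset.range m, c k - ∑ k ∈ Finset.range n, c k| ≤ 2 * (1 / 2) ^ N := by
  wlog hnm : n ≤ m generalizing m n
  · rw [abs_sub_comm]; exact this hn hm (le_of_not_ge hnm)
  rw [← Finset.sum_Ico_eq_sub _ hnm]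
  calc |∑ k ∈ Finset.Ico n m, c k| ≤ ∑ k ∈ Finset.Ico n m, (1 / 2 : ℝ) ^ k :=
        (Finset.abs_sum_le_sum_abs _ _).trans (Finset.sum_le_sum fun k _ => hc k)
    _ ≤ (1 / 2) ^ n / (1 - 1 / 2) := geom_sum_Ico_le_of_lt_one (by norm_num) (by norm_num)
    _ = 2 * (1 / 2) ^ n := by ring
    _ ≤ 2 * (1 / 2) ^ N :=
        mul_le_mul_of_nonneg_left (pow_le_pow_of_le_one (by norm_num) (by norm_num) hn) zero_le_two

section

variable {d : ℕ} {K : Set (EuclideanSpace ℝ (Fin d))}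

lemma exists_forall_dist_lt_connectedComponentIn_ne (hK : IsCompact K)
    (hinf : (comps K).Infinite) :
    ∃ x ∈ K, ∀ ε > 0, ∃ y ∈ K,
      connectedComponentIn K y ≠ connectedComponentIn K x ∧ dist y x < ε := by
  obtain e := hinf.natEmbedding
  choose u huK hu using fun n => (e n).2
  obtain ⟨x, hxK, φ, hφ, hlim⟩ := hK.tendsto_subseq huK
  have hinj : Function.Injective fun n => connectedComponentIn K (u (φ n)) := fun i j h =>
    hφ.injective <| e.injective <| Subtype.ext <| by rw [hu, hu]; exact h
  have hfin : {n | connectedComponentIn K (u (φ n)) = connectedComponentIn K x}.Finite :=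
    (Set.finite_singleton _).preimage hinj.injOn
  have hfreq : ∃ᶠ n in atTop, u (φ n) ∈ K ∧
      connectedComponentIn K (u (φ n)) ≠ connectedComponentIn K x := by
    rw [← Nat.cofinite_eq_atTop]
    exact (hfin.eventually_cofinite_notMem.mono fun n hn => ⟨huK (φ n), hn⟩).frequently
  refine ⟨x, hxK, fun ε hε => ?_⟩
  obtain ⟨y, hyx, hyK, hyc⟩ := Metric.nhds_basis_ball.frequently_iff.1
    (hlim.frequently (p := fun y => y ∈ K ∧
      connectedComponentIn K y ≠ connectedComponentIn K x) hfreq) ε hε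
  exact ⟨y, hyK, hyc, hyx⟩

lemma supNormOn_nonneg {α : Type*} [SeminormedAddGroup α]
    (g : EuclideanSpace ℝ (Fin d) → α) : 0 ≤ supNormOn K g :=
  Real.sSup_nonneg (by rintro _ ⟨z, _, rfl⟩; exact norm_nonneg _)

lemma supNormOn_le {α : Type*} [Norm α] {g : EuclideanSpace ℝ (Fin d) → α} {r : ℝ}
    (hr : 0 ≤ r) (h : ∀ z ∈ K, ‖g z‖ ≤ r) : supNormOn K g ≤ r :=
  Real.sSup_le (by rintro _ ⟨z, hz, rfl⟩; exact h z hz) hr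

-- Boundedness is needed: `sSup` of a set of reals that is not bounded above is `0`.
lemma norm_le_supNormOn {α : Type*} [SeminormedAddGroup α] {g : EuclideanSpace ℝ (Fin d) → α}
    (hK : IsCompact K) (hg : ContinuousOn g K) {z : EuclideanSpace ℝ (Fin d)} (hz : z ∈ K) :
    ‖g z‖ ≤ supNormOn K g :=
  le_csSup (hK.image_of_continuousOn hg.norm).bddAbove (mem_image_of_mem _ hz)

lemma supNormOn_le_c1Norm (f : EuclideanSpace ℝ (Fin d) → ℝ) : supNormOn K f ≤ c1Norm K f :=
  le_add_of_nonneg_right <| Real.sInf_nonneg <| by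
    rintro _ ⟨df, -, -, rfl⟩; exact supNormOn_nonneg df

lemma IsDerivOn.continuousOn {f : EuclideanSpace ℝ (Fin d) → ℝ}
    {df : EuclideanSpace ℝ (Fin d) → EuclideanSpace ℝ (Fin d)} (h : IsDerivOn K f df) :
    ContinuousOn f K := by
  intro x hx
  rw [← continuousWithinAt_sdiff_self]
  have hinner : Tendsto (fun y => inner ℝ (df x) (y - x)) (𝓝[K \ {x}] x) (𝓝 0) :=
    ((continuous_const.inner (continuous_id.sub continuous_const)).tendsto' x 0
      (by simp)).mono_left nhdsWithin_le_nhds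
  have hnorm : Tendsto (fun y => ‖y - x‖) (𝓝[K \ {x}] x) (𝓝 0) :=
    (tendsto_norm_sub_self x).mono_left nhdsWithin_le_nhds
  have hlim := (tendsto_const_nhds (x := f x)).add (hinner.add ((h x hx).mul hnorm))
  rw [zero_mul, add_zero, add_zero] at hlim
  refine hlim.congr' ?_
  filter_upwards [self_mem_nhdsWithin] with y hy
  have : ‖y - x‖ ≠ 0 := norm_ne_zero_iff.2 (sub_ne_zero.2 hy.2)
  field_simp
  ring

lemma IsLocallyConstantOn.isDerivOn_zero {F : EuclideanSpace ℝ (Fin d) → ℝ}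
    (h : IsLocallyConstantOn K F) : IsDerivOn K F 0 := fun x hx =>
  tendsto_const_nhds.congr' <| by
    filter_upwards [(h x hx).filter_mono (nhdsWithin_mono x sdiff_subset)] with y hy
    simp [hy]

lemma IsLocallyConstantOn.memC1 {F : EuclideanSpace ℝ (Fin d) → ℝ}
    (h : IsLocallyConstantOn K F) : MemC1 K F :=
  ⟨0, continuousOn_const, h.isDerivOn_zero⟩

lemma IsLocallyConstantOn.c1Norm_eq {F : EuclideanSpace ℝ (Fin d) → ℝ}
    (h : IsLocallyConstantOn K F) : c1Norm K F = supNormOn K F := by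
  have hzero : supNormOn K (0 : EuclideanSpace ℝ (Fin d) → EuclideanSpace ℝ (Fin d)) ≤ 0 :=
    supNormOn_le le_rfl (by simp)
  set D := {r | ∃ df, ContinuousOn df K ∧ IsDerivOn K F df ∧ r = supNormOn K df}
  have hD : ∀ r ∈ D, 0 ≤ r := by rintro _ ⟨df, -, -, rfl⟩; exact supNormOn_nonneg df
  have hle : sInf D ≤ 0 :=
    (csInf_le ⟨0, hD⟩ ⟨0, continuousOn_const, h.isDerivOn_zero, rfl⟩).trans hzero
  change supNormOn K F + sInf D = _
  linarith [Real.sInf_nonneg hD]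

lemma tendsto_apply_of_tendsto_c1Norm {F : ℕ → EuclideanSpace ℝ (Fin d) → ℝ}
    {g : EuclideanSpace ℝ (Fin d) → ℝ} (hK : IsCompact K) (hF : ∀ n, ContinuousOn (F n) K)
    (hg : ContinuousOn g K) (hlim : Tendsto (fun n => c1Norm K (F n - g)) atTop (𝓝 0))
    {z : EuclideanSpace ℝ (Fin d)} (hz : z ∈ K) : Tendsto (fun n => F n z) atTop (𝓝 (g z)) :=
  tendsto_iff_norm_sub_tendsto_zero.2 <| squeeze_zero_norm
    (fun n => (norm_norm _).le.trans <| (norm_le_supNormOn hK ((hF n).sub hg) hz).trans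
      (supNormOn_le_c1Norm _)) hlim

lemma not_isDerivOn_of_tendsto_slope_atTop {f : EuclideanSpace ℝ (Fin d) → ℝ}
    {df : EuclideanSpace ℝ (Fin d) → EuclideanSpace ℝ (Fin d)} {x : EuclideanSpace ℝ (Fin d)}
    (hx : x ∈ K) {y : ℕ → EuclideanSpace ℝ (Fin d)} (hyK : ∀ n, y n ∈ K \ {x})
    (hy : Tendsto y atTop (𝓝 x))
    (hslope : Tendsto (fun n => (f (y n) - f x) / ‖y n - x‖) atTop atTop) :
    ¬ IsDerivOn K f df := by
  intro h
  have hzero := (h x hx).comp (tendsto_nhdsWithin_iff.2 ⟨hy, Eventually.of_forall hyK⟩)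
  refine not_tendsto_nhds_of_tendsto_atTop ?_ 0 hzero
  refine tendsto_atTop_mono (fun n => ?_) (tendsto_atTop_add_const_right _ (-‖df x‖) hslope)
  have hpos : 0 < ‖y n - x‖ := norm_pos_iff.2 (sub_ne_zero.2 (hyK n).2)
  have hinner : inner ℝ (df x) (y n - x) / ‖y n - x‖ ≤ ‖df x‖ :=
    (div_le_iff₀ hpos).2 (real_inner_le_norm _ _)
  simp only [Function.comp_apply, sub_div _ (inner ℝ _ _)]
  linarith

lemma c1Cauchy_indicatorSeries {S : ℕ → Set (EuclideanSpace ℝ (Fin d))}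
    (hS : ∀ k, IsLocallyConstantOn K ((S k).indicator (1 : EuclideanSpace ℝ (Fin d) → ℝ))) :
    C1Cauchy K (indicatorSeries S) := by
  intro ε hε
  obtain ⟨N, hN⟩ := exists_pow_lt_of_lt_one (half_pos hε) (by norm_num : (1 / 2 : ℝ) < 1)
  refine ⟨N, fun m hm n hn => ?_⟩
  have hloc := isLocallyConstantOn_indicatorSeries hS
  refine ((hloc m).comp₂ (hloc n) (· - ·)).c1Norm_eq.trans_lt <|
    (supNormOn_le (r := 2 * (1 / 2) ^ N) (by positivity) fun z _ => ?_).trans_lt (by linarith)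
  refine (Real.norm_eq_abs _).trans_le <| abs_sum_range_sub_sum_range_le (fun k => ?_) hm hn
  by_cases hz : z ∈ S k <;> simp [hz]

end

theorem not_complete_of_infinitely_many_components {d : ℕ}
    (K : Set (EuclideanSpace ℝ (Fin d))) (hK : IsCompact K)
    (hinf : (comps K).Infinite) :
    ∃ f : ℕ → EuclideanSpace ℝ (Fin d) → ℝ,
      (∀ n, MemC1 K (f n)) ∧ C1Cauchy K f ∧
      ¬ ∃ g, MemC1 K g ∧
        Filter.Tendsto (fun n => c1Norm K (f n - g)) Filter.atTop (𝓝 0) := by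
  obtain ⟨x, hxK, hnear⟩ := exists_forall_dist_lt_connectedComponentIn_ne hK hinf
  choose y hyK hyc hyx using fun k : ℕ => hnear ((1 / 2) ^ k / (k + 1)) (by positivity)
  have hyx_ne (k : ℕ) : y k ≠ x := fun h => hyc k (by rw [h])
  choose S hS hyS hxS using fun k => exists_isLocallyConstantOn_indicator hK (hyK k) hxK (hyc k)
  have hF := isLocallyConstantOn_indicatorSeries hS
  refine ⟨indicatorSeries S, fun n => (hF n).memC1, c1Cauchy_indicatorSeries hS, ?_⟩
  rintro ⟨g, ⟨dg, -, hdg⟩, hlim⟩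
  have hFg {z} (hz : z ∈ K) : Tendsto (indicatorSeries S · z) atTop (𝓝 (g z)) :=
    tendsto_apply_of_tendsto_c1Norm hK (fun n => (hF n).continuousOn) hdg.continuousOn hlim hz
  have hgx : g x = 0 :=
    tendsto_nhds_unique (hFg hxK) (by simp [indicatorSeries_eq_zero hxS])
  have hgy (k : ℕ) : (1 / 2) ^ k ≤ g (y k) :=
    ge_of_tendsto (hFg (hyK k)) <| (eventually_gt_atTop k).mono fun _ =>
      pow_le_indicatorSeries (hyS k)
  refine not_isDerivOn_of_tendsto_slope_atTop hxK (fun k => ⟨hyK k, hyx_ne k⟩) ?_ ?_ hdg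
  · refine tendsto_iff_dist_tendsto_zero.2 <| squeeze_zero (fun _ => dist_nonneg)
      (fun k => (hyx k).le.trans (div_le_self (by positivity) (by simp))) ?_
    exact tendsto_pow_atTop_nhds_zero_of_lt_one (by norm_num) (by norm_num)
  · refine tendsto_atTop_mono (fun k => ?_) tendsto_natCast_atTop_atTop
    rw [hgx, sub_zero, ← dist_eq_norm, le_div_iff₀ (dist_pos.2 (hyx_ne k))]
    have := (lt_div_iff₀ (by positivity)).1 (hyx k)
    nlinarith [hgy k, dist_nonneg (x := y k) (y := x)]
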